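/- The Bell numbers satisfy B_n = ∑_{k=1}^n (−1)^{n−k} · (∑_{ℓ=1}^k L(k,ℓ)) · S(n,k), where L(k,ℓ) are the unsigned Lah numbers and S(n,k) the Stirling numbers of the second kind. -/

import Mathlib

open Finset

/-- The unsigned Lah numbers `L(k,ℓ) = (k!/ℓ!)·C(k−1,ℓ−1)`. -/
def lah (n k : ℕ) : ℕ :=
  if k = 0 then (if n = 0 then 1 else 0)
  else (n - 1).choose (k - 1) * (n.factorial / k.factorial)

/-- The Stirling numbers of the second kind. -/
def stirlingSecond : ℕ → ℕ → ℕ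
  | 0, 0 => 1
  | 0, _ + 1 => 0
  | _ + 1, 0 => 0
  | n + 1, k + 1 => stirlingSecond n k + (k + 1) * stirlingSecond n (k + 1)

/-- The Bell numbers `B_n = ∑_{k=0}^n S(n,k)`. -/
def bell (n : ℕ) : ℕ := ∑ k ∈ Finset.range (n + 1), stirlingSecond n k

/-!
Let `Φ` be the linear map `X ^ j ↦ T_j = ∑ₖ S(j,k) X ^ k` (Touchard polynomials), so that
`B_n = T_n(1)`. The recurrence of `S` reads `T_{j+1} = X (T_j + T_j')`, hence
`Φ (X p) = X (Φ p + (Φ p)')`. Applied to the rising factorials `x^(k+1) = (X + k) x^(k)`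
(`ascPochhammer`) this is the Lah recurrence, so `Φ (x^(k)) = ∑ₗ L(k,ℓ) X ^ ℓ`. The same
recurrence shows that the linear map `X ^ j ↦ (-1) ^ j x^(j)` sends `T_n` to `(-X) ^ n`, that is
`X ^ n = ∑ₖ (-1)^(n-k) S(n,k) x^(k)`. Applying `Φ` to this expansion and evaluating at `1` gives
the formula.
-/

open Polynomial

theorem stirlingSecond_eq_nat_stirlingSecond : stirlingSecond = Nat.stirlingSecond := by
  ext n k
  induction n generalizing k with
  | zero => cases k <;> rfl
  | succ n ih =>
    cases k with
    | zero => rfl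
    | succ k => rw [stirlingSecond, Nat.stirlingSecond_succ_succ, ih, ih, add_comm]

theorem sum_range_succ_eq_sum_Icc_one {M : Type*} [AddCommMonoid M] {f : ℕ → M} (hf : f 0 = 0)
    (n : ℕ) : ∑ k ∈ range (n + 1), f k = ∑ k ∈ Icc 1 n, f k := by
  rw [range_eq_Ico, sum_eq_sum_Ico_succ_bot (by omega : 0 < n + 1), hf, zero_add, zero_add,
    Ico_add_one_right_eq_Icc]

open Nat in
theorem cast_lah_succ_succ (k l : ℕ) :
    (lah (k + 1) (l + 1) : ℚ) = k.choose l * (k + 1)! / (l + 1)! := by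
  rw [lah, if_neg l.succ_ne_zero, Nat.add_sub_cancel, Nat.add_sub_cancel, Nat.cast_mul]
  rcases le_or_gt l k with hlk | hkl
  · rw [Nat.cast_div (Nat.factorial_dvd_factorial (by omega : l + 1 ≤ k + 1)) (by positivity),
      mul_div_assoc]
  · simp [Nat.choose_eq_zero_of_lt hkl]

theorem lah_succ_zero (k : ℕ) : lah (k + 1) 0 = 0 := rfl

-- The closed form gives the junk value `lah 0 1 = 1`.
theorem lah_eq_zero_of_lt {k l : ℕ} (hk : k ≠ 0) (h : k < l) : lah k l = 0 := by
  rw [lah, if_neg (Nat.ne_zero_of_lt h), Nat.choose_eq_zero_of_lt (by omega : k - 1 < l - 1),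
    zero_mul]

theorem lah_succ_succ {k : ℕ} (hk : k ≠ 0) (l : ℕ) :
    lah (k + 1) (l + 1) = lah k l + (k + l + 1) * lah k (l + 1) := by
  obtain ⟨k, rfl⟩ := Nat.exists_eq_add_one_of_ne_zero hk
  qify
  cases l with
  | zero => simp [cast_lah_succ_succ, lah_succ_zero, Nat.factorial_succ]
  | succ l =>
    have pascal := Nat.choose_succ_succ k l
    have absorb := Nat.add_one_mul_choose_eq k l
    qify at pascal absorb
    simp only [cast_lah_succ_succ, Nat.factorial_succ]
    push_cast
    field_simp
    linear_combination absorb + (k + l + 3) * pascal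

section Umbral

variable {R : Type*} [CommRing R]

variable (R) in
noncomputable def touchard (n : ℕ) : R[X] :=
  ∑ k ∈ range (n + 1), monomial k (Nat.stirlingSecond n k : R)

theorem coeff_touchard (n k : ℕ) : (touchard R n).coeff k = Nat.stirlingSecond n k := by
  rw [touchard, finsetSum_coeff, sum_eq_single k]
  · rw [coeff_monomial_same]
  · intro j _ hjk
    rw [coeff_monomial_of_ne _ hjk.symm]
  · intro hk
    rw [Nat.stirlingSecond_eq_zero_of_lt (by simpa using hk), Nat.cast_zero, coeff_monomial_same]

theorem touchard_succ (n : ℕ) :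
    touchard R (n + 1) = X * (touchard R n + derivative (touchard R n)) := by
  ext (_ | k)
  · simp [coeff_touchard]
  · rw [coeff_X_mul, coeff_add, coeff_derivative, coeff_touchard, coeff_touchard, coeff_touchard,
      Nat.stirlingSecond_succ_succ]
    push_cast
    ring

theorem eval_one_touchard (n : ℕ) : (touchard R n).eval 1 = bell n := by
  simp [touchard, bell, eval_finsetSum, stirlingSecond_eq_nat_stirlingSecond]

variable (R) in
noncomputable def signedAscPochhammerMap : R[X] →ₗ[R] R[X] :=
  lsum fun j => LinearMap.toSpanSingleton R R[X] ((-1) ^ j * ascPochhammer R j)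

theorem signedAscPochhammerMap_monomial (j : ℕ) (a : R) :
    signedAscPochhammerMap R (monomial j a) = a • ((-1) ^ j * ascPochhammer R j) := by
  simp [signedAscPochhammerMap]

theorem signedAscPochhammerMap_X_mul_add_derivative (p : R[X]) :
    signedAscPochhammerMap R (X * (p + derivative p)) = -X * signedAscPochhammerMap R p := by
  induction p using Polynomial.induction_on' with
  | add p q hp hq => simp only [map_add, mul_add, ← hp, ← hq]; abel
  | monomial j a =>
    rcases j with _ | j
    · rw [derivative_monomial, Nat.cast_zero, mul_zero, map_zero, add_zero, X_mul_monomial,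
        signedAscPochhammerMap_monomial, signedAscPochhammerMap_monomial, zero_add,
        ascPochhammer_one, ascPochhammer_zero]
      simp only [smul_eq_C_mul]
      ring
    · rw [derivative_monomial, mul_add, X_mul_monomial, X_mul_monomial, map_add, Nat.add_sub_cancel,
        signedAscPochhammerMap_monomial, signedAscPochhammerMap_monomial,
        signedAscPochhammerMap_monomial, ascPochhammer_succ_right R (j + 1)]
      simp only [smul_eq_C_mul, map_mul, map_natCast]
      push_cast
      ring

theorem signedAscPochhammerMap_touchard (n : ℕ) :
    signedAscPochhammerMap R (touchard R n) = (-X) ^ n := by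
  induction n with
  | zero =>
    rw [touchard, sum_range_one, Nat.stirlingSecond_zero, Nat.cast_one,
      signedAscPochhammerMap_monomial]
    simp
  | succ n ih =>
    rw [touchard_succ, signedAscPochhammerMap_X_mul_add_derivative, ih, pow_succ', neg_mul]

theorem X_pow_eq_sum_stirlingSecond_smul_ascPochhammer (n : ℕ) :
    (X : R[X]) ^ n =
      ∑ k ∈ range (n + 1), ((-1) ^ (n - k) * (Nat.stirlingSecond n k : R)) • ascPochhammer R k := by
  have h := signedAscPochhammerMap_touchard (R := R) n
  rw [touchard, map_sum] at h
  calc (X : R[X]) ^ n = (-1) ^ n * (-X) ^ n := by rw [← mul_pow]; simp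
    _ = _ := by
      rw [← h, mul_sum]
      refine sum_congr rfl fun k hk => ?_
      have hsign : (-1 : R) ^ n * (-1) ^ k = (-1) ^ (n - k) := by
        conv_lhs => rw [← Nat.sub_add_cancel (mem_range_succ_iff.1 hk)]
        rw [pow_add, mul_assoc, ← pow_add, ← two_mul, pow_mul, neg_one_sq, one_pow, mul_one]
      rw [signedAscPochhammerMap_monomial, ← hsign]
      simp only [smul_eq_C_mul, map_mul, map_pow, map_neg, map_one, map_natCast]
      ring

variable (R) in
noncomputable def touchardMap : R[X] →ₗ[R] R[X] :=
  lsum fun j => LinearMap.toSpanSingleton R R[X] (touchard R j)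

theorem touchardMap_monomial (j : ℕ) (a : R) :
    touchardMap R (monomial j a) = a • touchard R j := by
  simp [touchardMap]

theorem touchardMap_X_pow (n : ℕ) : touchardMap R (X ^ n) = touchard R n := by
  rw [← monomial_one_right_eq_X_pow, touchardMap_monomial, one_smul]

theorem touchardMap_X_mul (p : R[X]) :
    touchardMap R (X * p) = X * (touchardMap R p + derivative (touchardMap R p)) := by
  induction p using Polynomial.induction_on' with
  | add p q hp hq => simp only [mul_add, map_add, hp, hq]; ring
  | monomial j a =>
    rw [X_mul_monomial, touchardMap_monomial, touchardMap_monomial, touchard_succ, map_smul]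
    simp only [smul_eq_C_mul]
    ring

theorem coeff_touchardMap_ascPochhammer (k l : ℕ) :
    (touchardMap R (ascPochhammer R (k + 1))).coeff l = lah (k + 1) l := by
  induction k generalizing l with
  | zero =>
    rw [ascPochhammer_one, ← pow_one X, touchardMap_X_pow, coeff_touchard]
    rcases l with _ | _ | l <;>
      simp [lah, Nat.stirlingSecond_self, Nat.stirlingSecond_eq_zero_of_lt]
  | succ k ih =>
    have hasc : ascPochhammer R (k + 2) =
        X * ascPochhammer R (k + 1) + ((k + 1 : ℕ) : R) • ascPochhammer R (k + 1) := by
      rw [ascPochhammer_succ_right, smul_eq_C_mul]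
      simp only [map_natCast]
      ring
    rw [hasc, map_add, map_smul, touchardMap_X_mul, coeff_add, coeff_smul]
    rcases l with _ | l
    · simp [ih, lah_succ_zero]
    · rw [coeff_X_mul, coeff_add, coeff_derivative, ih, ih, smul_eq_mul,
        lah_succ_succ k.succ_ne_zero]
      push_cast
      ring

theorem eval_one_touchardMap_ascPochhammer {k : ℕ} (hk : k ≠ 0) :
    (touchardMap R (ascPochhammer R k)).eval 1 = ∑ l ∈ Icc 1 k, (lah k l : R) := by
  obtain ⟨k, rfl⟩ := Nat.exists_eq_add_one_of_ne_zero hk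
  have hdeg : (touchardMap R (ascPochhammer R (k + 1))).natDegree < k + 2 := by
    refine Nat.lt_succ_of_le (natDegree_le_iff_coeff_eq_zero.2 fun l hl => ?_)
    rw [coeff_touchardMap_ascPochhammer, lah_eq_zero_of_lt k.succ_ne_zero hl, Nat.cast_zero]
  rw [eval_eq_sum_range' hdeg, ← sum_range_succ_eq_sum_Icc_one (by simp [lah_succ_zero])]
  simp [coeff_touchardMap_ascPochhammer]

end Umbral

/-- Qi's formula
`B_n = ∑_{k=1}^n (−1)^{n−k} · (∑_{ℓ=1}^k L(k,ℓ)) · S(n,k)` (for `n ≥ 1`). -/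
theorem bell_eq_lah_stirling_sum (n : ℕ) (hn : 1 ≤ n) :
    (bell n : ℤ) = ∑ k ∈ Finset.Icc 1 n,
      (-1 : ℤ) ^ (n - k) * (∑ l ∈ Finset.Icc 1 k, (lah k l : ℤ)) *
        (stirlingSecond n k : ℤ) := by
  rw [← eval_one_touchard (R := ℤ), ← touchardMap_X_pow,
    X_pow_eq_sum_stirlingSecond_smul_ascPochhammer, map_sum, eval_finsetSum,
    sum_range_succ_eq_sum_Icc_one]
  · refine sum_congr rfl fun k hk => ?_
    rw [map_smul, eval_smul, eval_one_touchardMap_ascPochhammer (by grind), smul_eq_mul,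
      stirlingSecond_eq_nat_stirlingSecond]
    ring
  · obtain ⟨m, rfl⟩ := Nat.exists_eq_add_of_le' hn
    simp
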